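/- arXiv:1611.08175 — 3 statements merged into one kernel-verified Lean document; each statement's English description precedes it below -/
import Mathlib

section
/- Let Q be a positive joint distribution on 𝒳 × 𝒴. Then the projected relative entropy is convex in its first argument: for all joint distributions P̄ and P̃ on 𝒳 × 𝒴 and all p ∈ [0,1], E(p·P̄ + (1−p)·P̃ ‖ Q) ≤ p·E(P̄‖Q) + (1−p)·E(P̃‖Q). -/
/-!
The map `P ↦ D(P‖Q)` is convex, since each summand `t ↦ t log (t / q)` is, and the marginal
constraints are linear: mixing near-optimal couplings of `P̄` and `P̃` with weights `p, 1 - p`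
gives a coupling of the mixture whose relative entropy is at most the mixed values.
-/

open scoped Classical BigOperators

noncomputable section

variable {X Y : Type*} [Fintype X] [Fintype Y]

/-- `P` is a joint distribution on `X × Y`. -/
def IsDist (P : X × Y → ℝ) : Prop :=
  (∀ z, 0 ≤ P z) ∧ ∑ z : X × Y, P z = 1

/-- `P` is a positive joint distribution on `X × Y`. -/
def IsPos (P : X × Y → ℝ) : Prop :=
  (∀ z, 0 < P z) ∧ ∑ z : X × Y, P z = 1

/-- The first marginal of a joint distribution. -/
def margX (P : X × Y → ℝ) (x : X) : ℝ := ∑ y : Y, P (x, y)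

/-- The second marginal of a joint distribution. -/
def margY (P : X × Y → ℝ) (y : Y) : ℝ := ∑ x : X, P (x, y)

/-- Relative entropy `D(P‖Q)` (natural log; `Real.log 0 = 0` realizes `0·log 0 = 0`). -/
def relEnt (P Q : X × Y → ℝ) : ℝ := ∑ z : X × Y, P z * Real.log (P z / Q z)

/-- Projected relative entropy `E(P‖Q)`. -/
def projE (P Q : X × Y → ℝ) : ℝ :=
  sInf { d : ℝ | ∃ P' : X × Y → ℝ,
    IsDist P' ∧ margX P' = margX P ∧ margY P' = margY P ∧ d = relEnt P' Q }

/-- `R ∈ ℰ^{xy}(S)` : `R` has the same correlation coordinates as `S`. -/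
def SameCorr (R S : X × Y → ℝ) : Prop :=
  ∃ a1 : X → ℝ, ∃ a2 : Y → ℝ,
    ∀ x : X, ∀ y : Y, Real.log (R (x, y) / S (x, y)) = a1 x + a2 y

/-- The type (empirical distribution) of a sequence. -/
def empDist {n : ℕ} (x : Fin n → X) (a : X) : ℝ :=
  ((Finset.univ.filter fun i => x i = a).card : ℝ) / n

/-- The joint type of a pair of sequences. -/
def empJoint {n : ℕ} (x : Fin n → X) (y : Fin n → Y) (z : X × Y) : ℝ :=
  ((Finset.univ.filter fun i => x i = z.1 ∧ y i = z.2).card : ℝ) / n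

/-- Probability of a set under the `n`-fold i.i.d. product of `P`. -/
def prodProb (P : X × Y → ℝ) (n : ℕ) (A : Set ((Fin n → X) × (Fin n → Y))) : ℝ :=
  ∑ z : (Fin n → X) × (Fin n → Y),
    if z ∈ A then ∏ i : Fin n, P (z.1 i, z.2 i) else 0

/-- `P` is a joint type with denominator `n` (an element of `𝒫ₙ(𝒳 × 𝒴)`). -/
def IsTypeN (n : ℕ) (P : X × Y → ℝ) : Prop :=
  IsDist P ∧ ∀ z : X × Y, ∃ k : ℕ, P z = (k : ℝ) / n

/-- `Eₙ(P̄‖Q)` : projected relative entropy restricted to joint types. -/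
def En (n : ℕ) (Pbar Q : X × Y → ℝ) : ℝ :=
  sInf { d : ℝ | ∃ Pt : X × Y → ℝ,
    IsTypeN n Pt ∧ margX Pt = margX Pbar ∧ margY Pt = margY Pbar ∧ d = relEnt Pt Q }

/-- Standard normal cumulative distribution function `Φ`. -/
def stdNormalCDF (t : ℝ) : ℝ :=
  ∫ u in Set.Iic t, (Real.sqrt (2 * Real.pi))⁻¹ * Real.exp (-(u ^ 2) / 2)

/-- Inverse of the standard normal CDF, `Φ⁻¹`. -/
def stdNormalCDFInv (e : ℝ) : ℝ := Function.invFun stdNormalCDF e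

open Real Set InformationTheory

lemma sub_le_mul_log_div {t q : ℝ} (ht : 0 ≤ t) (hq : 0 < q) : t - q ≤ t * log (t / q) := by
  have h := mul_nonneg hq.le (klFun_nonneg (div_nonneg ht hq.le))
  rw [klFun_apply, mul_sub, mul_add, mul_one, ← mul_assoc, mul_div_cancel₀ _ hq.ne'] at h
  linarith

lemma convexOn_mul_log_div (q : ℝ) : ConvexOn ℝ (Ici 0) fun t => t * log (t / q) := by
  -- for `q = 0` the function vanishes, since `t / 0 = 0` and `log 0 = 0`
  rcases eq_or_ne q 0 with rfl | hq
  · simpa using convexOn_const (0 : ℝ) (convex_Ici (0 : ℝ))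
  · refine (convexOn_mul_log.sub ((LinearMap.mulRight ℝ (log q)).concaveOn (convex_Ici 0))).congr ?_
    intro t ht
    rcases (mem_Ici.1 ht).eq_or_lt with rfl | ht
    · simp
    · simp [log_div ht.ne' hq, mul_sub]

lemma csInf_le_mul_csInf_add_mul_csInf {S T U : Set ℝ} (hS : S.Nonempty) (hS' : BddBelow S)
    (hT : T.Nonempty) (hT' : BddBelow T) (hU : BddBelow U) {a b : ℝ} (ha : 0 ≤ a) (hb : 0 ≤ b)
    (h : ∀ s ∈ S, ∀ t ∈ T, ∃ u ∈ U, u ≤ a * s + b * t) :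
    sInf U ≤ a * sInf S + b * sInf T := by
  rw [← smul_eq_mul, ← smul_eq_mul, ← Real.sInf_smul_of_nonneg ha, ← Real.sInf_smul_of_nonneg hb,
    ← csInf_add hS.smul_set (hS'.smul_of_nonneg ha) hT.smul_set (hT'.smul_of_nonneg hb)]
  refine le_csInf (hS.smul_set.add hT.smul_set) ?_
  rintro _ ⟨_, ⟨s, hs, rfl⟩, _, ⟨t, ht, rfl⟩, rfl⟩
  obtain ⟨u, hu, hle⟩ := h s hs t ht
  exact (csInf_le hU hu).trans hle

lemma relEnt_nonneg {P Q : X × Y → ℝ} (hP : ∀ z, 0 ≤ P z) (hQ : ∀ z, 0 < Q z)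
    (hsum : ∑ z, P z = ∑ z, Q z) : 0 ≤ relEnt P Q := by
  have h := Finset.sum_le_sum fun z (_ : z ∈ Finset.univ) => sub_le_mul_log_div (hP z) (hQ z)
  rwa [Finset.sum_sub_distrib, hsum, sub_self] at h

lemma convexOn_relEnt (Q : X × Y → ℝ) :
    ConvexOn ℝ (univ.pi fun _ => Ici 0) fun P => relEnt P Q := by
  refine ⟨convex_pi fun _ _ => convex_Ici 0, fun P₁ hP₁ P₂ hP₂ a b ha hb hab => ?_⟩
  simp only [relEnt, smul_eq_mul, Finset.mul_sum, ← Finset.sum_add_distrib]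
  exact Finset.sum_le_sum fun z _ =>
    (convexOn_mul_log_div (Q z)).2 (hP₁ z trivial) (hP₂ z trivial) ha hb hab

lemma convex_setOf_isDist : Convex ℝ {P : X × Y → ℝ | IsDist P} := by
  intro P₁ hP₁ P₂ hP₂ a b ha hb hab
  refine ⟨fun z => ?_, ?_⟩
  · exact add_nonneg (mul_nonneg ha (hP₁.1 z)) (mul_nonneg hb (hP₂.1 z))
  · simp [Finset.sum_add_distrib, ← Finset.mul_sum, hP₁.2, hP₂.2, hab]

omit [Fintype X] in
@[simp]
lemma margX_add (P R : X × Y → ℝ) : margX (P + R) = margX P + margX R := by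
  funext x; simp [margX, Finset.sum_add_distrib]

omit [Fintype X] in
@[simp]
lemma margX_smul (a : ℝ) (P : X × Y → ℝ) : margX (a • P) = a • margX P := by
  funext x; simp [margX, Finset.mul_sum]

omit [Fintype Y] in
@[simp]
lemma margY_add (P R : X × Y → ℝ) : margY (P + R) = margY P + margY R := by
  funext y; simp [margY, Finset.sum_add_distrib]

omit [Fintype Y] in
@[simp]
lemma margY_smul (a : ℝ) (P : X × Y → ℝ) : margY (a • P) = a • margY P := by
  funext y; simp [margY, Finset.mul_sum]

lemma bddBelow_projE_set {Q : X × Y → ℝ} (hQ : IsPos Q) (P : X × Y → ℝ) :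
    BddBelow {d : ℝ | ∃ P' : X × Y → ℝ,
      IsDist P' ∧ margX P' = margX P ∧ margY P' = margY P ∧ d = relEnt P' Q} := by
  refine ⟨0, ?_⟩
  rintro _ ⟨P', hP', -, -, rfl⟩
  exact relEnt_nonneg hP'.1 hQ.1 (hP'.2.trans hQ.2.symm)

theorem projE_convex_in_first_argument_general
    (Q Pbar Ptil : X × Y → ℝ) (hQ : IsPos Q) (hPbar : IsDist Pbar) (hPtil : IsDist Ptil)
    (p : ℝ) (hp0 : 0 ≤ p) (hp1 : p ≤ 1) :
    projE (fun z => p * Pbar z + (1 - p) * Ptil z) Q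
      ≤ p * projE Pbar Q + (1 - p) * projE Ptil Q := by
  have hq0 : 0 ≤ 1 - p := sub_nonneg.2 hp1
  have hmix : (fun z => p * Pbar z + (1 - p) * Ptil z) = p • Pbar + (1 - p) • Ptil := rfl
  refine csInf_le_mul_csInf_add_mul_csInf (by exact ⟨_, Pbar, hPbar, rfl, rfl, rfl⟩)
    (bddBelow_projE_set hQ Pbar) (by exact ⟨_, Ptil, hPtil, rfl, rfl, rfl⟩)
    (bddBelow_projE_set hQ Ptil)
    (bddBelow_projE_set hQ _) hp0 hq0 ?_
  rintro _ ⟨P₁, hP₁, hX₁, hY₁, rfl⟩ _ ⟨P₂, hP₂, hX₂, hY₂, rfl⟩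
  refine ⟨_, ⟨p • P₁ + (1 - p) • P₂, convex_setOf_isDist hP₁ hP₂ hp0 hq0 (by ring),
    by simp [hmix, hX₁, hX₂], by simp [hmix, hY₁, hY₂], rfl⟩, ?_⟩
  exact (convexOn_relEnt Q).2 (fun z _ => hP₁.1 z) (fun z _ => hP₂.1 z) hp0 hq0 (by ring)

/-- convexity of the projected relative entropy in its first argument. -/
theorem projE_convex_in_first_argument
    [Nonempty X] [Nonempty Y]
    (Q Pbar Ptil : X × Y → ℝ) (hQ : IsPos Q) (hPbar : IsDist Pbar) (hPtil : IsDist Ptil)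
    (p : ℝ) (hp0 : 0 ≤ p) (hp1 : p ≤ 1) :
    projE (fun z => p * Pbar z + (1 - p) * Ptil z) Q
      ≤ p * projE Pbar Q + (1 - p) * projE Ptil Q :=
  projE_convex_in_first_argument_general Q Pbar Ptil hQ hPbar hPtil p hp0 hp1
end
end

section
/- Let P and Q be positive joint distributions on 𝒳 × 𝒴, and let P̃ and Q̃ be positive joint distributions with P̃ ∈ ℰ^{xy}(P), Q̃ ∈ ℰ^{xy}(Q), P̃_X = Q̃_X and P̃_Y = Q̃_Y. Then Σ_{x,y} P̃(x,y)·log(Q̃(x,y)/Q(x,y)) = D(Q̃‖Q). -/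
open scoped Classical BigOperators

noncomputable section

variable {X Y : Type*} [Fintype X] [Fintype Y]

/-! `log (Q̃/Q)` is a sum of a function of `x` and a function of `y`, so its expectation depends
only on the marginals of the distribution it is taken under; `P̃` and `Q̃` have the same ones. -/

theorem sum_mul_add_eq_sum_margX_add_sum_margY (f : X × Y → ℝ) (a : X → ℝ) (b : Y → ℝ) :
    ∑ z : X × Y, f z * (a z.1 + b z.2) =
      ∑ x : X, margX f x * a x + ∑ y : Y, margY f y * b y := by
  simp only [mul_add, Finset.sum_add_distrib, Fintype.sum_prod_type, margX, margY,
    Finset.sum_mul]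
  rw [Finset.sum_comm (f := fun x y => f (x, y) * b y)]

theorem sum_mul_add_eq_of_marg_eq {f g : X × Y → ℝ} (hX : margX f = margX g)
    (hY : margY f = margY g) (a : X → ℝ) (b : Y → ℝ) :
    ∑ z : X × Y, f z * (a z.1 + b z.2) = ∑ z : X × Y, g z * (a z.1 + b z.2) := by
  rw [sum_mul_add_eq_sum_margX_add_sum_margY, sum_mul_add_eq_sum_margX_add_sum_margY, hX, hY]

theorem sum_log_ratio_eq_relEnt_general
    (Q Ptil Qtil : X × Y → ℝ)
    (hQcorr : SameCorr Qtil Q)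
    (hmargX : margX Ptil = margX Qtil) (hmargY : margY Ptil = margY Qtil) :
    ∑ z : X × Y, Ptil z * Real.log (Qtil z / Q z) = relEnt Qtil Q := by
  obtain ⟨a, b, hab⟩ := hQcorr
  have hlog : ∀ z : X × Y, Real.log (Qtil z / Q z) = a z.1 + b z.2 := fun z => hab z.1 z.2
  simp only [relEnt, hlog]
  exact sum_mul_add_eq_of_marg_eq hmargX hmargY a b

/-- Corollary of the Pythagorean identity. -/
theorem sum_log_ratio_eq_relEnt
    [Nonempty X] [Nonempty Y]
    (P Q Ptil Qtil : X × Y → ℝ)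
    (hP : IsPos P) (hQ : IsPos Q) (hPtil : IsPos Ptil) (hQtil : IsPos Qtil)
    (hPcorr : SameCorr Ptil P) (hQcorr : SameCorr Qtil Q)
    (hmargX : margX Ptil = margX Qtil) (hmargY : margY Ptil = margY Qtil) :
    ∑ z : X × Y, Ptil z * Real.log (Qtil z / Q z) = relEnt Qtil Q :=
  sum_log_ratio_eq_relEnt_general Q Ptil Qtil hQcorr hmargX hmargY
end
end

section
/- Let P and Q be positive joint distributions on 𝒳 × 𝒴, let n ≥ 1 and r > 0. For a joint type P̄ ∈ 𝒫_n(𝒳 × 𝒴), define E_n(P̄‖Q) = min{ D(P̃‖Q) : P̃ ∈ 𝒫_n(𝒳 × 𝒴), P̃_X = P̄_X, P̃_Y = P̄_Y }. Let A ⊆ 𝒳ⁿ × 𝒴ⁿ be an acceptance region that depends only on the pair of marginal types, i.e., if t_x = t_{x'} and t_y = t_{y'} then (x,y) ∈ A ⇔ (x',y') ∈ A. If Q^n(A) ≤ exp(−r·n), then P^n((𝒳ⁿ × 𝒴ⁿ)∖A) ≥ P^n({(x,y) : E_n(t_{xy}‖Q) < r − (|𝒳||𝒴|−1)·log(n+1)/n}).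 -/
open scoped Classical BigOperators

noncomputable section

variable {X Y : Type*} [Fintype X] [Fintype Y]

/-!
Fix `z ∈ A` and a joint type `P̃` with the marginals of `t_z`. As `A` only sees marginal types,
the whole type class of `P̃` lies in `A`, so `e^{-rn} ≥ Qⁿ(A) ≥ Qⁿ(T(P̃))`. By the method of types,
`Qⁿ(T(P̃)) ≥ (n+1)^{-(|𝒳||𝒴|-1)} e^{-n D(P̃‖Q)}`, hence `D(P̃‖Q)` is at least the threshold
`r - (|𝒳||𝒴|-1) log(n+1)/n`, and so is the minimum `E_n(t_z‖Q)`. Thus the event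
`E_n(t_{xy}‖Q) < threshold` lies in the complement of `A`.

For the type class bound write `Qⁿ(T(k)) = multinomial(k) ∏ Q^k = e^{-nD} multinomial(k) ∏ p^k`
with `p = k/n`. Since `m ↦ k^m/m!` peaks at `m = k`, the term of `k` is the largest in the
multinomial expansion of `(∑ p)ⁿ = 1`, which has at most `(n+1)^{|Z|-1}` terms for an
alphabet `Z`.
-/

open Finset

namespace MethodOfTypes

variable {Z : Type*} {n : ℕ}

def seqCount (f : Fin n → Z) (a : Z) : ℕ := #{i | f i = a}

theorem seqCount_comp_perm (f : Fin n → Z) (σ : Equiv.Perm (Fin n)) :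
    seqCount (f ∘ σ) = seqCount f := by
  funext a
  simp only [seqCount, ← Fintype.card_subtype]
  exact Fintype.card_congr (σ.subtypeEquiv fun _ => Iff.rfl)

theorem exists_perm_comp_eq {f g : Fin n → Z} (h : seqCount f = seqCount g) :
    ∃ σ : Equiv.Perm (Fin n), g ∘ σ = f := by
  have e : ∀ a, {i // f i = a} ≃ {i // g i = a} := fun a =>
    Fintype.equivOfCardEq (by simpa only [seqCount, Fintype.card_subtype] using congrFun h a)
  refine ⟨(Equiv.sigmaFiberEquiv f).symm.trans
    ((Equiv.sigmaCongrRight e).trans (Equiv.sigmaFiberEquiv g)), funext fun i => ?_⟩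
  exact (e (f i) ⟨i, rfl⟩).2

variable [Fintype Z]

def typeClass (n : ℕ) (k : Z → ℕ) : Finset (Fin n → Z) := {f | seqCount f = k}

theorem sum_seqCount (f : Fin n → Z) : ∑ a, seqCount f a = n := by
  simpa [seqCount] using (card_eq_sum_card_fiberwise (s := univ) (t := univ)
    (f := f) fun i _ => mem_univ (f i)).symm

theorem prod_comp_eq_prod_pow_seqCount {M : Type*} [CommMonoid M] (g : Z → M) (f : Fin n → Z) :
    ∏ i, g (f i) = ∏ a, g a ^ seqCount f a := by
  rw [← prod_fiberwise univ f]
  refine prod_congr rfl fun a _ => ?_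
  rw [prod_congr rfl fun i hi => by rw [(mem_filter.mp hi).2], prod_const]
  rfl

theorem exists_seqCount_eq {k : Z → ℕ} (hk : ∑ a, k a = n) : ∃ f : Fin n → Z, seqCount f = k := by
  obtain ⟨e⟩ : Nonempty (Fin n ≃ Σ a, Fin (k a)) :=
    ⟨(Fintype.equivOfCardEq (by simp [hk]) : (Σ a, Fin (k a)) ≃ Fin n).symm⟩
  refine ⟨fun i => (e i).1, funext fun a => ?_⟩
  rw [seqCount, ← Fintype.card_subtype, ← Fintype.card_fin (k a)]
  exact Fintype.card_congr ((e.subtypeEquiv fun _ => Iff.rfl).trans (Equiv.sigmaSubtype a))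

theorem card_typeClass {k : Z → ℕ} (hk : ∑ a, k a = n) :
    #(typeClass n k) = Nat.multinomial univ k := by
  obtain ⟨f₀, hf₀⟩ := exists_seqCount_eq hk
  have hfiber : ∀ f ∈ typeClass n k,
      #{σ : Equiv.Perm (Fin n) | f₀ ∘ σ = f} = ∏ a, (k a).factorial := by
    intro f hf
    have hf : seqCount f = k := (mem_filter.mp hf).2
    obtain ⟨τ, rfl⟩ := exists_perm_comp_eq (hf.trans hf₀.symm)
    -- the fibre over `f₀ ∘ τ` is the coset `τ * stabilizer (f₀ ∘ τ)`
    rw [← Fintype.card_subtype, ← hf]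
    calc Fintype.card {σ : Equiv.Perm (Fin n) // f₀ ∘ σ = f₀ ∘ τ}
        = Fintype.card {ρ : Equiv.Perm (Fin n) // (f₀ ∘ τ) ∘ ρ = f₀ ∘ τ} :=
          Fintype.card_congr ((Equiv.mulLeft τ⁻¹).subtypeEquiv fun σ => by
            simp [funext_iff])
      _ = _ := by rw [DomMulAct.stabilizer_card]; simp only [seqCount, Fintype.card_subtype]
  have hmaps : ∀ σ ∈ (univ : Finset (Equiv.Perm (Fin n))), f₀ ∘ σ ∈ typeClass n k := fun σ _ =>
    mem_filter.mpr ⟨mem_univ _, (seqCount_comp_perm f₀ σ).trans hf₀⟩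
  have hcount := card_eq_sum_card_fiberwise hmaps
  have hspec := Nat.multinomial_spec univ k
  rw [hk] at hspec
  rw [card_univ, Fintype.card_perm, Fintype.card_fin, sum_congr rfl hfiber, sum_const,
    smul_eq_mul, ← hspec, mul_comm] at hcount
  exact (Nat.eq_of_mul_eq_mul_right (prod_pos fun a _ => Nat.factorial_pos _) hcount).symm

theorem sum_typeClass_prod {R : Type*} [CommSemiring R] {k : Z → ℕ} (hk : ∑ a, k a = n)
    (g : Z → R) :
    ∑ f ∈ typeClass n k, ∏ i, g (f i) = Nat.multinomial univ k * ∏ a, g a ^ k a := by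
  rw [sum_congr rfl fun f hf => by rw [prod_comp_eq_prod_pow_seqCount, (mem_filter.mp hf).2],
    sum_const, card_typeClass hk, nsmul_eq_mul]

theorem pow_mul_factorial_le_pow_self_mul_factorial (k l : ℕ) :
    k ^ l * k.factorial ≤ k ^ k * l.factorial := by
  rcases le_total l k with h | h
  · have hk : k.factorial = l.factorial * k.descFactorial (k - l) := by
      rw [← Nat.factorial_mul_descFactorial (Nat.sub_le k l), Nat.sub_sub_self h]
    calc k ^ l * k.factorial ≤ k ^ l * (l.factorial * k ^ (k - l)) := by
          rw [hk]; gcongr; exact Nat.descFactorial_le_pow k _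
      _ = k ^ k * l.factorial := by rw [mul_left_comm, ← pow_add, Nat.add_sub_cancel' h, mul_comm]
  · calc k ^ l * k.factorial = k ^ k * (k.factorial * k ^ (l - k)) := by
          rw [mul_left_comm, ← pow_add, Nat.add_sub_cancel' h, mul_comm]
      _ ≤ k ^ k * l.factorial := by gcongr; exact Nat.factorial_mul_pow_sub_le_factorial h

theorem multinomial_mul_prod_pow_le {k l : Z → ℕ} (hk : ∑ a, k a = n) (hl : ∑ a, l a = n) :
    (Nat.multinomial univ l : ℝ) * ∏ a, ((k a : ℝ) / n) ^ l a
      ≤ Nat.multinomial univ k * ∏ a, ((k a : ℝ) / n) ^ k a := by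
  have hnat :
      Nat.multinomial univ l * ∏ a, k a ^ l a ≤ Nat.multinomial univ k * ∏ a, k a ^ k a := by
    set L := ∏ a, (l a).factorial
    set K := ∏ a, (k a).factorial
    have hLK : 0 < L * K :=
      Nat.mul_pos (prod_pos fun a _ => Nat.factorial_pos _) (prod_pos fun a _ => Nat.factorial_pos _)
    refine Nat.le_of_mul_le_mul_right ?_ hLK
    calc (Nat.multinomial univ l * ∏ a, k a ^ l a) * (L * K)
        = (L * Nat.multinomial univ l) * ∏ a, (k a ^ l a * (k a).factorial) := by
          rw [prod_mul_distrib]; ring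
      _ = n.factorial * ∏ a, (k a ^ l a * (k a).factorial) := by rw [Nat.multinomial_spec, hl]
      _ ≤ n.factorial * ∏ a, (k a ^ k a * (l a).factorial) :=
          Nat.mul_le_mul_left _ (prod_le_prod (fun _ _ => Nat.zero_le _)
            fun a _ => pow_mul_factorial_le_pow_self_mul_factorial _ _)
      _ = (K * Nat.multinomial univ k) * ∏ a, (k a ^ k a * (l a).factorial) := by
          rw [Nat.multinomial_spec, hk]
      _ = (Nat.multinomial univ k * ∏ a, k a ^ k a) * (L * K) := by rw [prod_mul_distrib]; ring
  have hsplit : ∀ m : Z → ℕ, ∑ a, m a = n →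
      ∏ a, ((k a : ℝ) / n) ^ m a = (∏ a, k a ^ m a : ℕ) / (n : ℝ) ^ n := fun m hm => by
    rw [← hm]; push_cast; simp only [div_pow, prod_div_distrib, prod_pow_eq_pow_sum]
  rw [hsplit l hl, hsplit k hk, ← mul_div_assoc, ← mul_div_assoc]
  exact div_le_div_of_nonneg_right (by exact_mod_cast hnat) (by positivity)

theorem card_piAntidiag_univ_le (n : ℕ) :
    #(piAntidiag (univ : Finset Z) n) ≤ (n + 1) ^ (Fintype.card Z - 1) := by
  rcases isEmpty_or_nonempty Z with hZ | ⟨⟨a₀⟩⟩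
  · simpa using card_le_one_of_subsingleton (piAntidiag (univ : Finset Z) n)
  let restrict : (Z → ℕ) → {a // a ≠ a₀} → ℕ := fun l b => l b
  have hinj : Set.InjOn restrict (piAntidiag (univ : Finset Z) n : Set (Z → ℕ)) := by
    intro l₁ h₁ l₂ h₂ h
    have hoff : ∀ a ≠ a₀, l₁ a = l₂ a := fun a ha => congrFun h ⟨a, ha⟩
    have hsum := (mem_piAntidiag.mp h₁).1.trans (mem_piAntidiag.mp h₂).1.symm
    rw [← add_sum_erase _ _ (mem_univ a₀), ← add_sum_erase _ _ (mem_univ a₀),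
      sum_congr rfl fun a ha => hoff a (ne_of_mem_erase ha)] at hsum
    funext a
    by_cases ha : a = a₀
    · subst ha; exact Nat.add_right_cancel hsum
    · exact hoff a ha
  have hmaps : ∀ l ∈ piAntidiag univ n, restrict l ∈ Fintype.piFinset fun _ => range (n + 1) :=
    fun l hl => Fintype.mem_piFinset.mpr fun b => mem_range.mpr (Nat.lt_succ_of_le
      ((single_le_sum (fun _ _ => Nat.zero_le _) (mem_univ b.1)).trans (mem_piAntidiag.mp hl).1.le))
  calc #(piAntidiag univ n) ≤ #(Fintype.piFinset fun _ : {a // a ≠ a₀} => range (n + 1)) :=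
        card_le_card_of_injOn restrict hmaps hinj
    _ = (n + 1) ^ (Fintype.card Z - 1) := by simp [Fintype.card_subtype_compl]

theorem one_le_succ_pow_mul_multinomial_mul_prod_pow {k : Z → ℕ} (hn : 0 < n)
    (hk : ∑ a, k a = n) :
    1 ≤ ((n : ℝ) + 1) ^ (Fintype.card Z - 1)
      * (Nat.multinomial univ k * ∏ a, ((k a : ℝ) / n) ^ k a) := by
  have hsum : ∑ a, (k a : ℝ) / n = 1 := by
    rw [← sum_div, ← Nat.cast_sum, hk, div_self (by positivity)]
  calc (1 : ℝ) = (∑ a, (k a : ℝ) / n) ^ n := by rw [hsum, one_pow]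
    _ = ∑ l ∈ piAntidiag univ n, Nat.multinomial univ l * ∏ a, ((k a : ℝ) / n) ^ l a :=
        sum_pow_eq_sum_piAntidiag _ _ _
    _ ≤ #(piAntidiag (univ : Finset Z) n) • (Nat.multinomial univ k * ∏ a, ((k a : ℝ) / n) ^ k a) :=
        sum_le_card_nsmul _ _ _ fun l hl => multinomial_mul_prod_pow_le hk (mem_piAntidiag.mp hl).1
    _ ≤ _ := by
        rw [nsmul_eq_mul]
        gcongr
        exact_mod_cast card_piAntidiag_univ_le n

theorem prod_pow_eq_exp_mul_prod_pow (hn : 0 < n) {Q : Z → ℝ} (hQ : ∀ a, 0 < Q a) (k : Z → ℕ) :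
    ∏ a, Q a ^ k a = Real.exp (-(n * ∑ a, (k a / n : ℝ) * Real.log ((k a / n) / Q a)))
      * ∏ a, ((k a : ℝ) / n) ^ k a := by
  have hterm : ∀ a, Q a ^ k a
      = Real.exp (-(k a * Real.log ((k a / n) / Q a))) * ((k a : ℝ) / n) ^ k a := by
    intro a
    rcases (k a).eq_zero_or_pos with h | h
    · simp [h]
    have hp : (0 : ℝ) < k a / n := by positivity
    rw [← mul_neg, ← Real.log_inv, inv_div, Real.exp_nat_mul, Real.exp_log (div_pos (hQ a) hp),
      div_pow, div_mul_cancel₀ _ (pow_ne_zero _ hp.ne')]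
  have hmul : ∀ a, (n : ℝ) * ((k a / n : ℝ) * Real.log ((k a / n) / Q a))
      = k a * Real.log ((k a / n) / Q a) := fun a => by
    rw [← mul_assoc, mul_div_cancel₀ _ (by positivity)]
  rw [prod_congr rfl fun a _ => hterm a, prod_mul_distrib, ← Real.exp_sum, mul_sum,
    ← sum_neg_distrib]
  simp only [hmul]

theorem exp_neg_mul_le_succ_pow_mul_sum_typeClass_prod (hn : 0 < n) {Q : Z → ℝ}
    (hQ : ∀ a, 0 < Q a) {k : Z → ℕ} (hk : ∑ a, k a = n) :
    Real.exp (-(n * ∑ a, (k a / n : ℝ) * Real.log ((k a / n) / Q a)))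
      ≤ ((n : ℝ) + 1) ^ (Fintype.card Z - 1) * ∑ f ∈ typeClass n k, ∏ i, Q (f i) := by
  rw [sum_typeClass_prod hk, prod_pow_eq_exp_mul_prod_pow hn hQ]
  calc Real.exp _ = Real.exp _ * 1 := (mul_one _).symm
    _ ≤ Real.exp _ * (((n : ℝ) + 1) ^ (Fintype.card Z - 1)
          * (Nat.multinomial univ k * ∏ a, ((k a : ℝ) / n) ^ k a)) :=
        mul_le_mul_of_nonneg_left (one_le_succ_pow_mul_multinomial_mul_prod_pow hn hk)
          (Real.exp_pos _).le
    _ = _ := by ring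

theorem empJoint_eq_seqCount {α β : Type*} (x : Fin n → α) (y : Fin n → β) :
    empJoint x y = fun a => (seqCount (fun i => (x i, y i)) a : ℝ) / n := by
  funext a
  simp [empJoint, seqCount, Prod.ext_iff]

theorem margX_empJoint {α β : Type*} [Fintype β] (x : Fin n → α) (y : Fin n → β) :
    margX (empJoint x y) = empDist x := by
  funext a
  simp only [margX, empJoint, empDist, ← sum_div, card_filter, ← Nat.cast_sum]
  rw [sum_comm]
  simp [ite_and]

theorem margY_empJoint {α β : Type*} [Fintype α] (x : Fin n → α) (y : Fin n → β) :
    margY (empJoint x y) = empDist y := by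
  funext b
  simp only [margY, empJoint, empDist, ← sum_div, card_filter, ← Nat.cast_sum]
  rw [sum_comm]
  simp [ite_and]

theorem isTypeN_empJoint (hn : 0 < n) (x : Fin n → X) (y : Fin n → Y) :
    IsTypeN n (empJoint x y) := by
  rw [empJoint_eq_seqCount]
  refine ⟨⟨fun _ => by positivity, ?_⟩, fun a => ⟨_, rfl⟩⟩
  rw [← sum_div, ← Nat.cast_sum, sum_seqCount, div_self (by positivity)]

theorem prodProb_mono {P : X × Y → ℝ} (hP : ∀ z, 0 ≤ P z) {A B : Set ((Fin n → X) × (Fin n → Y))}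
    (hAB : A ⊆ B) : prodProb P n A ≤ prodProb P n B := by
  refine sum_le_sum fun z _ => ?_
  by_cases hA : z ∈ A
  · simp [hA, hAB hA]
  · rw [if_neg hA]
    split_ifs
    exacts [prod_nonneg fun i _ => hP _, le_rfl]

theorem prodProb_empJoint_eq (hn : 0 < n) (Q : X × Y → ℝ) (k : X × Y → ℕ) :
    prodProb Q n {z | empJoint z.1 z.2 = fun a => (k a : ℝ) / n}
      = ∑ f ∈ typeClass n k, ∏ i, Q (f i) := by
  have hcast : ∀ f : Fin n → X × Y,
      ((fun a => (seqCount f a : ℝ) / n) = fun a => (k a : ℝ) / n) ↔ seqCount f = k := by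
    intro f
    simp only [funext_iff, div_left_inj' (show (n : ℝ) ≠ 0 by positivity), Nat.cast_inj]
  rw [prodProb, ← (Equiv.arrowProdEquivProdArrow _ _ _).sum_comp, typeClass, sum_filter]
  refine sum_congr rfl fun f _ => ?_
  simp [empJoint_eq_seqCount, Equiv.arrowProdEquivProdArrow, hcast]

theorem sub_le_relEnt_of_typeClass_subset (hn : 0 < n) {Q : X × Y → ℝ} (hQ : ∀ z, 0 < Q z)
    {Pt : X × Y → ℝ} (hPt : IsTypeN n Pt) {A : Set ((Fin n → X) × (Fin n → Y))}
    (hsub : {z | empJoint z.1 z.2 = Pt} ⊆ A) {r : ℝ}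
    (hA : prodProb Q n A ≤ Real.exp (-r * n)) :
    r - ((Fintype.card X : ℝ) * Fintype.card Y - 1) * Real.log (n + 1) / n ≤ relEnt Pt Q := by
  obtain ⟨⟨-, hsum⟩, hk⟩ := hPt
  choose k hk using hk
  obtain rfl : Pt = fun a => (k a : ℝ) / n := funext hk
  have hkn : ∑ a, k a = n := by
    rw [← sum_div, div_eq_one_iff_eq (by positivity)] at hsum
    exact_mod_cast hsum
  have hcard : 1 ≤ Fintype.card (X × Y) := by
    obtain ⟨a, -, -⟩ := exists_ne_zero_of_sum_ne_zero (hkn.trans_ne hn.ne')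
    exact Fintype.card_pos_iff.mpr ⟨a⟩
  have hbound : Real.exp (-(n * relEnt (fun a => (k a : ℝ) / n) Q))
      ≤ ((n : ℝ) + 1) ^ (Fintype.card (X × Y) - 1) * Real.exp (-r * n) :=
    calc _ ≤ ((n : ℝ) + 1) ^ (Fintype.card (X × Y) - 1) * ∑ f ∈ typeClass n k, ∏ i, Q (f i) :=
          exp_neg_mul_le_succ_pow_mul_sum_typeClass_prod hn hQ hkn
      _ ≤ _ := by
          rw [← prodProb_empJoint_eq hn]
          gcongr
          exact (prodProb_mono (fun z => (hQ z).le) hsub).trans hA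
  have hlog := Real.log_le_log (Real.exp_pos _) hbound
  rw [Real.log_mul (by positivity) (Real.exp_pos _).ne', Real.log_exp, Real.log_exp,
    Real.log_pow, Nat.cast_sub hcard, Fintype.card_prod] at hlog
  push_cast at hlog
  rw [sub_le_iff_le_add, ← sub_le_iff_le_add', le_div_iff₀ (by positivity)]
  linarith

theorem sub_le_En_of_mem (hn : 0 < n) {Q : X × Y → ℝ} (hQ : ∀ z, 0 < Q z)
    {A : Set ((Fin n → X) × (Fin n → Y))}
    (hsym : ∀ x x' : Fin n → X, ∀ y y' : Fin n → Y,
      empDist x = empDist x' → empDist y = empDist y' → ((x, y) ∈ A ↔ (x', y') ∈ A))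
    {r : ℝ} (hA : prodProb Q n A ≤ Real.exp (-r * n)) {z : (Fin n → X) × (Fin n → Y)}
    (hz : z ∈ A) :
    r - ((Fintype.card X : ℝ) * Fintype.card Y - 1) * Real.log (n + 1) / n
      ≤ En n (empJoint z.1 z.2) Q := by
  refine le_csInf ⟨_, _, isTypeN_empJoint hn z.1 z.2, rfl, rfl, rfl⟩ ?_
  rintro _ ⟨Pt, hPt, hX, hY, rfl⟩
  refine sub_le_relEnt_of_typeClass_subset hn hQ hPt (fun z' (hz' : empJoint _ _ = Pt) => ?_) hA
  refine (hsym z.1 z'.1 z.2 z'.2 ?_ ?_).mp hz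
  · rw [← margX_empJoint z.1 z.2, ← margX_empJoint z'.1 z'.2, hz', hX]
  · rw [← margY_empJoint z.1 z.2, ← margY_empJoint z'.1 z'.2, hz', hY]

end MethodOfTypes

open MethodOfTypes

theorem symmetric_scheme_converse_general
    (P Q : X × Y → ℝ) (hP : IsPos P) (hQ : IsPos Q)
    (n : ℕ) (hn : 1 ≤ n) (r : ℝ)
    (A : Set ((Fin n → X) × (Fin n → Y)))
    (hsym : ∀ x x' : Fin n → X, ∀ y y' : Fin n → Y,
      empDist x = empDist x' → empDist y = empDist y' → ((x, y) ∈ A ↔ (x', y') ∈ A))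
    (hβ : prodProb Q n A ≤ Real.exp (-r * (n : ℝ))) :
    prodProb P n Aᶜ
      ≥ prodProb P n
          {z : (Fin n → X) × (Fin n → Y) |
            En n (empJoint z.1 z.2) Q
              < r - ((Fintype.card X : ℝ) * (Fintype.card Y : ℝ) - 1)
                  * Real.log ((n : ℝ) + 1) / (n : ℝ)} :=
  prodProb_mono (fun z => (hP.1 z).le) fun _ hz hzA =>
    (not_le.mpr hz) (sub_le_En_of_mem hn hQ.1 hsym hβ hzA)

/-- converse bound for symmetric (type-based) testing schemes. -/
theorem symmetric_scheme_converse
    [Nonempty X] [Nonempty Y]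
    (P Q : X × Y → ℝ) (hP : IsPos P) (hQ : IsPos Q)
    (n : ℕ) (hn : 1 ≤ n) (r : ℝ) (hr : 0 < r)
    (A : Set ((Fin n → X) × (Fin n → Y)))
    (hsym : ∀ x x' : Fin n → X, ∀ y y' : Fin n → Y,
      empDist x = empDist x' → empDist y = empDist y' → ((x, y) ∈ A ↔ (x', y') ∈ A))
    (hβ : prodProb Q n A ≤ Real.exp (-r * (n : ℝ))) :
    prodProb P n Aᶜ
      ≥ prodProb P n
          {z : (Fin n → X) × (Fin n → Y) |
            En n (empJoint z.1 z.2) Q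
              < r - ((Fintype.card X : ℝ) * (Fintype.card Y : ℝ) - 1)
                  * Real.log ((n : ℝ) + 1) / (n : ℝ)} :=
  symmetric_scheme_converse_general P Q hP hQ n hn r A hsym hβ
end
end
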